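/- arXiv:1402.3408 — 2 statements merged into one kernel-verified Lean document; each statement's English description precedes it below -/
import Mathlib

section
/- In a generalized group satisfying e(s·t) = e(s)·e(t) for all s, t, one has e(s)·e(t)·e(s) = e(s) for all s, t. -/
/-! Put `a = e(s)`, `b = e(t)` and `v = a·b·a`. Multiplicativity of `e` gives `v = e(s·t·s)`, so `v`
is itself an identity: `e(v) = v`. Since `a` is idempotent, `v·a = v = a·v`, and uniqueness of the
identity of `v` forces `a = e(v) = v`. -/

universe u v

structure GenGroup (T : Type u) where
  mul : T → T → T
  mul_assoc : ∀ a b c : T, mul (mul a b) c = mul a (mul b c)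
  e : T → T
  mul_e : ∀ t, mul t (e t) = t
  e_mul : ∀ t, mul (e t) t = t
  e_unique : ∀ t u : T, mul t u = t → mul u t = t → u = e t
  inv : T → T
  mul_inv : ∀ t, mul t (inv t) = e t
  inv_mul : ∀ t, mul (inv t) t = e t

namespace GenGroup

variable {T : Type u} (G : GenGroup T)

theorem e_mul_e_self (s : T) : G.mul (G.e s) (G.e s) = G.e s := by
  refine G.e_unique s _ ?_ ?_
  · rw [← G.mul_assoc, G.mul_e, G.mul_e]
  · rw [G.mul_assoc, G.e_mul, G.e_mul]

theorem e_e (s : T) : G.e (G.e s) = G.e s :=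
  (G.e_unique (G.e s) (G.e s) (G.e_mul_e_self s) (G.e_mul_e_self s)).symm

end GenGroup

theorem e_sandwich {T : Type u} (G : GenGroup T)
    (he : ∀ s t : T, G.e (G.mul s t) = G.mul (G.e s) (G.e t)) (s t : T) :
    G.mul (G.mul (G.e s) (G.e t)) (G.e s) = G.e s := by
  set a := G.e s
  set v := G.mul (G.mul a (G.e t)) a
  have hv : G.e (G.mul s (G.mul t s)) = v := by
    rw [he, he, ← G.mul_assoc]
  have hva : G.mul v a = v := by
    rw [G.mul_assoc _ a a, G.e_mul_e_self]
  have hav : G.mul a v = v := by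
    rw [← G.mul_assoc, ← G.mul_assoc, G.e_mul_e_self]
  calc v = G.e v := by rw [← hv, G.e_e]
    _ = a := (G.e_unique v a hva hav).symm
end

section
/- Let (X, T, λ) be a T-space with T compact and λ perfect. Then X is compact if and only if X/T is compact, and X is locally compact if and only if X/T is locally compact. -/
universe u v

structure GenAction {T : Type u} (G : GenGroup T) (X : Type v) where
  act : T → X → X
  act_mul : ∀ s t x, act s (act t x) = act (G.mul s t) x
  act_e : ∀ x : X, ∃ t : T, act (G.e t) x = x

/-!
Perfectness makes the orbit relation symmetric (`t⁻¹ • t • x = e(t) • x = x`), so it is an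
equivalence and the fibres of the quotient map `q : X → X/T` are the orbits `T • x`, which are
compact. The map `q` is open, since the saturation `⋃ t, {x | t • x ∈ U}` of an open set is open,
and closed, since the saturation of a closed set `C` is the projection along the compact factor
`T` of the closed set `{(t, x) | t • x ∈ C}`; hence `q` is proper. Compactness then passes up
along the proper map and down along the continuous surjection, while local compactness passes
down along the open quotient map and up along the proper map.
-/

open Set Function

section ProperOpenQuotient

variable {X Y : Type*} [TopologicalSpace X] [TopologicalSpace Y] {f : X → Y}

theorem IsProperMap.compactSpace [CompactSpace Y] (hf : IsProperMap f) : CompactSpace X :=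
  ⟨by simpa using hf.isCompact_preimage isCompact_univ⟩

theorem IsProperMap.weaklyLocallyCompactSpace [WeaklyLocallyCompactSpace Y] (hf : IsProperMap f) :
    WeaklyLocallyCompactSpace X where
  exists_compact_mem_nhds x := by
    obtain ⟨K, hK, hKx⟩ := exists_compact_mem_nhds (f x)
    exact ⟨f ⁻¹' K, hf.isCompact_preimage hK, hf.continuous.continuousAt.preimage_mem_nhds hKx⟩

theorem IsProperMap.compactSpace_iff (hf : IsProperMap f) (hsurj : Surjective f) :
    CompactSpace X ↔ CompactSpace Y :=
  ⟨fun _ => hsurj.compactSpace hf.continuous, fun _ => hf.compactSpace⟩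

theorem IsOpenQuotientMap.locallyCompactSpace_iff [R1Space X] (hf : IsOpenQuotientMap f)
    (hp : IsProperMap f) : LocallyCompactSpace X ↔ LocallyCompactSpace Y := by
  refine ⟨fun _ => hf.locallyCompactSpace, fun _ => ?_⟩
  have := hp.weaklyLocallyCompactSpace
  infer_instance

end ProperOpenQuotient

namespace GenAction

variable {T : Type*} {X : Type*} {G : GenGroup T} (A : GenAction G X)

def orbitRel : X → X → Prop := fun x y => ∃ t : T, A.act t x = y

variable {A}

theorem orbitRel_equivalence (hperf : ∀ t x, A.act (G.e t) x = x) : Equivalence A.orbitRel where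
  refl x := let ⟨t, ht⟩ := A.act_e x; ⟨G.e t, ht⟩
  symm := by
    rintro x _ ⟨t, rfl⟩
    exact ⟨G.inv t, by rw [A.act_mul, G.inv_mul, hperf]⟩
  trans := by
    rintro x _ _ ⟨s, rfl⟩ ⟨t, rfl⟩
    exact ⟨G.mul t s, (A.act_mul t s x).symm⟩

theorem mk_eq_mk_iff (hperf : ∀ t x, A.act (G.e t) x = x) {x y : X} :
    Quot.mk A.orbitRel x = Quot.mk A.orbitRel y ↔ A.orbitRel x y := by
  rw [Quot.eq, (orbitRel_equivalence hperf).eqvGen_iff]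

theorem preimage_image_mk (hperf : ∀ t x, A.act (G.e t) x = x) (S : Set X) :
    Quot.mk A.orbitRel ⁻¹' (Quot.mk A.orbitRel '' S) = {x | ∃ t, A.act t x ∈ S} := by
  ext x
  simp only [mem_preimage, mem_image, mem_ofPred_eq, mk_eq_mk_iff hperf]
  constructor
  · rintro ⟨y, hy, hyx⟩
    obtain ⟨t, rfl⟩ := (orbitRel_equivalence hperf).symm hyx
    exact ⟨t, hy⟩
  · rintro ⟨t, ht⟩
    exact ⟨A.act t x, ht, (orbitRel_equivalence hperf).symm ⟨t, rfl⟩⟩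

theorem preimage_mk_singleton_mk (hperf : ∀ t x, A.act (G.e t) x = x) (x : X) :
    Quot.mk A.orbitRel ⁻¹' {Quot.mk A.orbitRel x} = range fun t => A.act t x := by
  ext y
  simp only [mem_preimage, mem_singleton_iff, mk_eq_mk_iff hperf, mem_range]
  exact ⟨(orbitRel_equivalence hperf).symm, (orbitRel_equivalence hperf).symm⟩

variable [TopologicalSpace X]

theorem isOpenMap_mk (hact : ∀ t, Continuous (A.act t)) (hperf : ∀ t x, A.act (G.e t) x = x) :
    IsOpenMap (Quot.mk A.orbitRel) := by
  intro U hU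
  rw [isOpen_coinduced, preimage_image_mk hperf, ofPred_exists]
  exact isOpen_iUnion fun t => hU.preimage (hact t)

variable [TopologicalSpace T]

theorem isOpenQuotientMap_mk (hact : Continuous fun p : T × X => A.act p.1 p.2)
    (hperf : ∀ t x, A.act (G.e t) x = x) : IsOpenQuotientMap (Quot.mk A.orbitRel) :=
  ⟨Quot.exists_rep, continuous_quot_mk,
    isOpenMap_mk (fun t => hact.comp (Continuous.prodMk_right t)) hperf⟩

variable [CompactSpace T]

theorem isClosedMap_mk (hact : Continuous fun p : T × X => A.act p.1 p.2)
    (hperf : ∀ t x, A.act (G.e t) x = x) : IsClosedMap (Quot.mk A.orbitRel) := by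
  intro C hC
  rw [← isOpen_compl_iff, isOpen_coinduced, preimage_compl, isOpen_compl_iff,
    preimage_image_mk hperf]
  have hsat : {x | ∃ t, A.act t x ∈ C} = Prod.snd '' ((fun p : T × X => A.act p.1 p.2) ⁻¹' C) := by
    ext x
    simp
  rw [hsat]
  exact isClosedMap_snd_of_compactSpace _ (hC.preimage hact)

theorem isProperMap_mk (hact : Continuous fun p : T × X => A.act p.1 p.2)
    (hperf : ∀ t x, A.act (G.e t) x = x) : IsProperMap (Quot.mk A.orbitRel) := by
  refine isProperMap_iff_isClosedMap_and_compact_fibers.2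
    ⟨continuous_quot_mk, isClosedMap_mk hact hperf, ?_⟩
  rintro ⟨x⟩
  rw [preimage_mk_singleton_mk hperf]
  exact isCompact_range (hact.comp (Continuous.prodMk_left x))

end GenAction

theorem quotient_compactness_general {T : Type u} {X : Type v}
    [TopologicalSpace T] [CompactSpace T]
    [TopologicalSpace X] [T2Space X]
    (G : GenGroup T)
    (A : GenAction G X)
    (hact : Continuous fun p : T × X => A.act p.1 p.2)
    (hperf : ∀ (t : T) (x : X), A.act (G.e t) x = x) :
    (CompactSpace X ↔ CompactSpace (Quot fun x y : X => ∃ t : T, A.act t x = y)) ∧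
    (LocallyCompactSpace X ↔
      LocallyCompactSpace (Quot fun x y : X => ∃ t : T, A.act t x = y)) :=
  ⟨(GenAction.isProperMap_mk hact hperf).compactSpace_iff Quot.exists_rep,
    (GenAction.isOpenQuotientMap_mk hact hperf).locallyCompactSpace_iff
      (GenAction.isProperMap_mk hact hperf)⟩

theorem quotient_compactness {T : Type u} {X : Type v}
    [TopologicalSpace T] [T2Space T] [CompactSpace T]
    [TopologicalSpace X] [T2Space X]
    (G : GenGroup T)
    (hmul : Continuous fun p : T × T => G.mul p.1 p.2)
    (hinv : Continuous G.inv)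
    (he : ∀ s t : T, G.e (G.mul s t) = G.mul (G.e s) (G.e t))
    (A : GenAction G X)
    (hact : Continuous fun p : T × X => A.act p.1 p.2)
    (hperf : ∀ (t : T) (x : X), A.act (G.e t) x = x) :
    (CompactSpace X ↔ CompactSpace (Quot fun x y : X => ∃ t : T, A.act t x = y)) ∧
    (LocallyCompactSpace X ↔
      LocallyCompactSpace (Quot fun x y : X => ∃ t : T, A.act t x = y)) :=
  quotient_compactness_general G A hact hperf
end
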